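/- arXiv:2508.11432 — 3 statements merged into one kernel-verified Lean document; each statement's English description precedes it below -/
import Mathlib

section
/- Let W be an n×n real matrix, ρ > 0, and 0 < κ̲ ≤ κ̄. Suppose that for every index i, -ρ - 2κ̲ W_{ii} - κ̄ Σ_{j≠i}(|W_{ij}| + |W_{ji}|) > 0. Then for any diagonal matrix J with diagonal entries J_{ii} ∈ [κ̲, κ̄], the matrix -ρI - JW - WᵀJ is positive definite. -/
/-!
The matrix `A = -ρ I - J W - Wᵀ J` is symmetric, with `A i i = -ρ - 2 J i i W i i` and
`|A i j| ≤ κ̄ (|W i j| + |W j i|)` off the diagonal. The hypothesis forces `W i i < 0`, so the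
diagonal is smallest at the lower slope bound, and the hypothesis says precisely that `A` is then
strictly diagonally dominant with positive diagonal. By Gershgorin every eigenvalue of the
symmetric matrix `A` is positive.
-/

open Finset Matrix

namespace Matrix

variable {ι : Type*} [Fintype ι] [DecidableEq ι]

open scoped ComplexOrder in
theorem IsHermitian.posDef_of_sum_norm_lt_re_diag {𝕜 : Type*} [RCLike 𝕜] {A : Matrix ι ι 𝕜}
    (hA : A.IsHermitian) (h : ∀ i, ∑ j ∈ univ.erase i, ‖A i j‖ < RCLike.re (A i i)) :
    A.PosDef := by
  refine hA.posDef_iff_eigenvalues_pos.mpr fun i => ?_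
  have hμ : Module.End.HasEigenvalue (toLin' A) (hA.eigenvalues i : 𝕜) := by
    rw [Module.End.hasEigenvalue_iff_mem_spectrum, spectrum_toLin']
    exact spectrum.algebraMap_mem 𝕜 (hA.eigenvalues_mem_spectrum_real i)
  obtain ⟨k, hk⟩ := eigenvalue_mem_ball hμ
  rw [mem_closedBall_iff_norm'] at hk
  have hre := RCLike.re_le_norm (A k k - hA.eigenvalues i)
  rw [map_sub, RCLike.ofReal_re] at hre
  linarith [h k]

theorem smul_one_sub_diagonal_mul_sub_transpose_mul_diagonal_apply {α : Type*} [CommRing α]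
    (c : α) (d : ι → α) (W : Matrix ι ι α) (i j : ι) :
    (c • (1 : Matrix ι ι α) - diagonal d * W - Wᵀ * diagonal d) i j =
      c * (1 : Matrix ι ι α) i j - d i * W i j - d j * W j i := by
  simp [diagonal_mul, mul_diagonal, mul_comm]

theorem isHermitian_smul_one_sub_diagonal_mul_sub_transpose_mul_diagonal (c : ℝ) (d : ι → ℝ)
    (W : Matrix ι ι ℝ) :
    (c • (1 : Matrix ι ι ℝ) - diagonal d * W - Wᵀ * diagonal d).IsHermitian := by
  have hM : Wᵀ * diagonal d = (diagonal d * W)ᴴ := by simp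
  rw [hM, sub_sub]
  exact (isHermitian_one.smul (IsSelfAdjoint.all c)).sub (isHermitian_add_transpose_self _)

variable {W : Matrix ι ι ℝ} {ρ κl κu : ℝ} {d : ι → ℝ}

theorem abs_smul_one_sub_diagonal_mul_sub_transpose_mul_diagonal_apply_le {i j : ι} (hij : i ≠ j)
    (hdi : d i ∈ Set.Icc 0 κu) (hdj : d j ∈ Set.Icc 0 κu) :
    |((-ρ) • (1 : Matrix ι ι ℝ) - diagonal d * W - Wᵀ * diagonal d) i j| ≤
      κu * (|W i j| + |W j i|) := by
  rw [smul_one_sub_diagonal_mul_sub_transpose_mul_diagonal_apply, one_apply_ne hij, mul_zero,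
    zero_sub, ← neg_add' (d i * W i j), abs_neg]
  calc |d i * W i j + d j * W j i| ≤ d i * |W i j| + d j * |W j i| := by
        simpa only [abs_mul, abs_of_nonneg hdi.1, abs_of_nonneg hdj.1] using
          abs_add_le (d i * W i j) (d j * W j i)
    _ ≤ κu * (|W i j| + |W j i|) := by
        nlinarith [hdi.2, hdj.2, abs_nonneg (W i j), abs_nonneg (W j i)]

theorem sum_abs_offDiag_lt_diag_of_slope_bounds (hρ : 0 < ρ) (hκl : 0 < κl)
    (hW : ∀ i, 0 < -ρ - 2 * κl * W i i - κu * ∑ j ∈ univ.erase i, (|W i j| + |W j i|))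
    (hd : ∀ i, d i ∈ Set.Icc κl κu) (i : ι) :
    ∑ j ∈ univ.erase i, |((-ρ) • (1 : Matrix ι ι ℝ) - diagonal d * W - Wᵀ * diagonal d) i j| <
      ((-ρ) • (1 : Matrix ι ι ℝ) - diagonal d * W - Wᵀ * diagonal d) i i := by
  have hd₀ : ∀ k, d k ∈ Set.Icc 0 κu := fun k => ⟨hκl.le.trans (hd k).1, (hd k).2⟩
  have hS : 0 ≤ κu * ∑ j ∈ univ.erase i, (|W i j| + |W j i|) :=
    mul_nonneg ((hd₀ i).1.trans (hd₀ i).2) (sum_nonneg fun j _ => by positivity)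
  have hWii : W i i < 0 := by nlinarith [hW i]
  calc _ ≤ κu * ∑ j ∈ univ.erase i, (|W i j| + |W j i|) := by
        rw [mul_sum]
        exact sum_le_sum fun j hj =>
          abs_smul_one_sub_diagonal_mul_sub_transpose_mul_diagonal_apply_le
            (ne_of_mem_erase hj).symm (hd₀ i) (hd₀ j)
    _ < -ρ - 2 * κl * W i i := by linarith [hW i]
    _ ≤ -ρ - 2 * d i * W i i := by nlinarith [(hd i).1]
    _ = _ := by
        rw [smul_one_sub_diagonal_mul_sub_transpose_mul_diagonal_apply, one_apply_eq]
        ring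

end Matrix

theorem stmt_2_general {n : ℕ} (W : Matrix (Fin n) (Fin n) ℝ) (ρ κl κu : ℝ)
    (hρ : 0 < ρ) (hκl : 0 < κl)
    (hW : ∀ i, 0 < -ρ - 2 * κl * W i i -
      κu * ∑ j ∈ Finset.univ.erase i, (|W i j| + |W j i|)) :
    ∀ J : Matrix (Fin n) (Fin n) ℝ, (∀ i j, i ≠ j → J i j = 0) →
      (∀ i, J i i ∈ Set.Icc κl κu) →
      ((-ρ) • (1 : Matrix (Fin n) (Fin n) ℝ) - J * W - Wᵀ * J).PosDef := by
  intro J hJdiag hJ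
  rw [← IsDiag.diagonal_diag hJdiag]
  refine (isHermitian_smul_one_sub_diagonal_mul_sub_transpose_mul_diagonal _ _ _)
    |>.posDef_of_sum_norm_lt_re_diag fun i => ?_
  exact sum_abs_offDiag_lt_diag_of_slope_bounds (d := J.diag) hρ hκl hW hJ i

theorem stmt_2 {n : ℕ} (W : Matrix (Fin n) (Fin n) ℝ) (ρ κl κu : ℝ)
    (hρ : 0 < ρ) (hκl : 0 < κl) (hκ : κl ≤ κu)
    (hW : ∀ i, 0 < -ρ - 2 * κl * W i i -
      κu * ∑ j ∈ Finset.univ.erase i, (|W i j| + |W j i|)) :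
    ∀ J : Matrix (Fin n) (Fin n) ℝ, (∀ i j, i ≠ j → J i j = 0) →
      (∀ i, J i i ∈ Set.Icc κl κu) →
      ((-ρ) • (1 : Matrix (Fin n) (Fin n) ℝ) - J * W - Wᵀ * J).PosDef :=
  stmt_2_general W ρ κl κu hρ hκl hW
end

section
/- Let f : ℝⁿ × [0,T] → ℝⁿ be continuously differentiable in x, and suppose there exists ρ > 0 such that the matrix -ρI - (∂f/∂x + (∂f/∂x)ᵀ) is positive semidefinite at every (x,t). Then any two solutions x, x̂ of ẋ = f(x,t) satisfy ‖x̂(t) - x(t)‖ ≤ e^{-(ρ/2) t} ‖x̂(0) - x(0)‖ for all t ∈ [0,T]. -/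
/-!
The difference `e = x̂ - x` satisfies `ė = f(x̂, t) - f(x, t)`. Applying the mean value theorem
to `u ↦ ⟪f(x + u e, t), e⟫` turns the bound on the symmetrized Jacobian into the one-sided
Lipschitz estimate `⟪ė, e⟫ ≤ -(ρ/2) ‖e‖²`, so `d/dt ‖e‖² ≤ -ρ ‖e‖²`, and Grönwall's inequality
gives `‖e(t)‖² ≤ e^{-ρ t} ‖e(0)‖²`.
-/

open Set Real

open scoped RealInnerProductSpace

variable {E : Type*} [NormedAddCommGroup E] [InnerProductSpace ℝ E]

theorem inner_sub_sub_le_of_inner_fderiv_le {f : E → E} {D : E → E →L[ℝ] E} {c : ℝ}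
    (hf : ∀ y, HasFDerivAt f (D y) y) (hD : ∀ y v, ⟪D y v, v⟫ ≤ -c * ‖v‖ ^ 2) (a b : E) :
    ⟪f a - f b, a - b⟫ ≤ -c * ‖a - b‖ ^ 2 := by
  set v := a - b
  have hg : ∀ u : ℝ, HasDerivAt (fun u : ℝ => ⟪f (b + u • v), v⟫) ⟪D (b + u • v) v, v⟫ u := by
    intro u
    have hline : HasDerivAt (fun u : ℝ => b + u • v) v u := by
      simpa only [one_smul] using ((hasDerivAt_id' u).smul_const v).const_add b
    simpa only [Function.comp_apply, inner_zero_right, zero_add] using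
      ((hf _).comp_hasDerivAt u hline).inner ℝ (hasDerivAt_const u v)
  obtain ⟨u, -, hu⟩ := exists_hasDerivAt_eq_slope (fun u : ℝ => ⟪f (b + u • v), v⟫) _
    zero_lt_one (fun u _ => (hg u).continuousAt.continuousWithinAt) (fun u _ => hg u)
  have hend : b + (1 : ℝ) • v = a := by simp only [one_smul, add_sub_cancel, v]
  simp only [hend, zero_smul, add_zero, sub_zero, div_one] at hu
  rw [inner_sub_left, ← hu]
  exact hD _ v

theorem norm_le_exp_mul_of_inner_deriv_le {e e' : ℝ → E} {c a b : ℝ}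
    (he : ContinuousOn e (Icc a b)) (he' : ∀ s ∈ Ico a b, HasDerivWithinAt e (e' s) (Ici s) s)
    (bound : ∀ s ∈ Ico a b, ⟪e' s, e s⟫ ≤ -c * ‖e s‖ ^ 2) :
    ∀ t ∈ Icc a b, ‖e t‖ ≤ exp (-c * (t - a)) * ‖e a‖ := by
  have hsq : ∀ t ∈ Icc a b, ‖e t‖ ^ 2 ≤ gronwallBound (‖e a‖ ^ 2) (-2 * c) 0 (t - a) := by
    refine le_gronwallBound_of_liminf_deriv_right_le (f' := fun s => 2 * ⟪e s, e' s⟫)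
      ((continuous_norm.comp_continuousOn he).pow 2) (fun s hs r hr => ?_) le_rfl ?_
    · exact ((he' s hs).norm_sq).liminf_right_slope_le hr
    · intro s hs
      rw [real_inner_comm]
      linarith [bound s hs]
  intro t ht
  have hexp : exp (-2 * c * (t - a)) = exp (-c * (t - a)) ^ 2 := by
    rw [← exp_nat_mul]; ring_nf
  refine le_of_sq_le_sq ?_ (by positivity)
  calc ‖e t‖ ^ 2 ≤ ‖e a‖ ^ 2 * exp (-2 * c * (t - a)) := by
        simpa only [gronwallBound_ε0] using hsq t ht
    _ = (exp (-c * (t - a)) * ‖e a‖) ^ 2 := by rw [hexp]; ring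

theorem stmt_5_general {n : ℕ} (T ρ : ℝ)
    (f : EuclideanSpace ℝ (Fin n) → ℝ → EuclideanSpace ℝ (Fin n))
    (D : EuclideanSpace ℝ (Fin n) → ℝ →
      (EuclideanSpace ℝ (Fin n) →L[ℝ] EuclideanSpace ℝ (Fin n)))
    (hdiff : ∀ (x : EuclideanSpace ℝ (Fin n)) (t : ℝ), t ∈ Set.Icc 0 T →
      HasFDerivAt (fun y => f y t) (D x t) x)
    -- -ρI - (∂f/∂x + (∂f/∂x)ᵀ) ⪰ 0 :  vᵀ(Df + Dfᵀ)v = 2⟪Df v, v⟫ ≤ -ρ‖v‖²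
    (hpsd : ∀ (x v : EuclideanSpace ℝ (Fin n)) (t : ℝ), t ∈ Set.Icc 0 T →
      0 ≤ -ρ * ‖v‖ ^ 2 - 2 * (inner ℝ (D x t v) v : ℝ))
    (x xh : ℝ → EuclideanSpace ℝ (Fin n))
    (hx : ∀ t ∈ Set.Icc 0 T, HasDerivAt x (f (x t) t) t)
    (hxh : ∀ t ∈ Set.Icc 0 T, HasDerivAt xh (f (xh t) t) t) :
    ∀ t ∈ Set.Icc 0 T, ‖xh t - x t‖ ≤ Real.exp (-(ρ / 2) * t) * ‖xh 0 - x 0‖ := by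
  have herr : ∀ s ∈ Icc 0 T, HasDerivAt (xh - x) (f (xh s) s - f (x s) s) s :=
    fun s hs => (hxh s hs).sub (hx s hs)
  have hcontract : ∀ s ∈ Icc 0 T,
      ⟪f (xh s) s - f (x s) s, xh s - x s⟫ ≤ -(ρ / 2) * ‖xh s - x s‖ ^ 2 :=
    fun s hs => inner_sub_sub_le_of_inner_fderiv_le (fun y => hdiff y s hs)
      (fun y v => by linarith [hpsd y v s hs]) (xh s) (x s)
  intro t ht
  simpa only [Pi.sub_apply, sub_zero] using norm_le_exp_mul_of_inner_deriv_le (e := xh - x)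
    (fun s hs => (herr s hs).continuousAt.continuousWithinAt)
    (fun s hs => (herr s (Ico_subset_Icc_self hs)).hasDerivWithinAt)
    (fun s hs => hcontract s (Ico_subset_Icc_self hs)) t ht

theorem stmt_5 {n : ℕ} (T ρ : ℝ) (hT : 0 < T) (hρ : 0 < ρ)
    (f : EuclideanSpace ℝ (Fin n) → ℝ → EuclideanSpace ℝ (Fin n))
    (D : EuclideanSpace ℝ (Fin n) → ℝ →
      (EuclideanSpace ℝ (Fin n) →L[ℝ] EuclideanSpace ℝ (Fin n)))
    (hdiff : ∀ (x : EuclideanSpace ℝ (Fin n)) (t : ℝ), t ∈ Set.Icc 0 T →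
      HasFDerivAt (fun y => f y t) (D x t) x)
    (hDcont : Continuous fun p : EuclideanSpace ℝ (Fin n) × ℝ => D p.1 p.2)
    -- -ρI - (∂f/∂x + (∂f/∂x)ᵀ) ⪰ 0 :  vᵀ(Df + Dfᵀ)v = 2⟪Df v, v⟫ ≤ -ρ‖v‖²
    (hpsd : ∀ (x v : EuclideanSpace ℝ (Fin n)) (t : ℝ), t ∈ Set.Icc 0 T →
      0 ≤ -ρ * ‖v‖ ^ 2 - 2 * (inner ℝ (D x t v) v : ℝ))
    (x xh : ℝ → EuclideanSpace ℝ (Fin n))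
    (hx : ∀ t ∈ Set.Icc 0 T, HasDerivAt x (f (x t) t) t)
    (hxh : ∀ t ∈ Set.Icc 0 T, HasDerivAt xh (f (xh t) t) t) :
    ∀ t ∈ Set.Icc 0 T, ‖xh t - x t‖ ≤ Real.exp (-(ρ / 2) * t) * ‖xh 0 - x 0‖ :=
  stmt_5_general T ρ f D hdiff hpsd x xh hx hxh
end

section
/- Let W be an n×n real matrix, ρ > 0, 0 < κ̲ ≤ κ̄, and suppose for every i that ρ + 2(κ̲ + κ̄)W_{ii} + κ̄ Σ_{j=1}^n (|W_{ij}| + |W_{ji}|) < 0. Then for any diagonal matrix J with J_{ii} ∈ [κ̲, κ̄] for all i, the smallest eigenvalue of the symmetric matrix -ρI - JW - WᵀJ is strictly positive. -/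
open Finset Matrix

/-!
By Gershgorin's theorem every eigenvalue of a Hermitian matrix `A` is at least
`re (A k k) - ∑ j ≠ k, ‖A k j‖` for some row `k`, so strict row diagonal dominance with positive
diagonal gives positive eigenvalues. For `Γ = -ρI - JW - WᵀJ` with `J` diagonal and
`κl ≤ J k k ≤ κu`, the off-diagonal row sum is at most `κu ∑ j ≠ k, (|W k j| + |W j k|)`, and the
weight condition is exactly what makes this smaller than `Γ k k = -ρ - 2 J k k W k k` whatever the
sign of `W k k`.
-/

namespace Matrix.IsHermitian

variable {𝕜 ι : Type*} [RCLike 𝕜] [Fintype ι] [DecidableEq ι] {A : Matrix ι ι 𝕜}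

theorem hasEigenvalue_eigenvalues (hA : A.IsHermitian) (i : ι) :
    Module.End.HasEigenvalue (toLin' A) (hA.eigenvalues i : 𝕜) := by
  rw [Module.End.hasEigenvalue_iff_mem_spectrum, spectrum_toLin']
  exact spectrum.algebraMap_mem 𝕜 (hA.eigenvalues_mem_spectrum_real i)

theorem exists_re_diag_sub_sum_norm_le_eigenvalues (hA : A.IsHermitian) (i : ι) :
    ∃ k, RCLike.re (A k k) - ∑ j ∈ univ.erase k, ‖A k j‖ ≤ hA.eigenvalues i := by
  obtain ⟨k, hk⟩ := eigenvalue_mem_ball (hA.hasEigenvalue_eigenvalues i)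
  refine ⟨k, ?_⟩
  rw [mem_closedBall_iff_norm'] at hk
  have := RCLike.re_le_norm (A k k - hA.eigenvalues i)
  rw [map_sub, RCLike.ofReal_re] at this
  linarith

theorem eigenvalues_pos_of_sum_norm_lt_re_diag (hA : A.IsHermitian)
    (h : ∀ k, ∑ j ∈ univ.erase k, ‖A k j‖ < RCLike.re (A k k)) (i : ι) :
    0 < hA.eigenvalues i := by
  obtain ⟨k, hk⟩ := hA.exists_re_diag_sub_sum_norm_le_eigenvalues i
  linarith [h k]

end Matrix.IsHermitian

section Contraction

variable {ι : Type*} [Fintype ι] [DecidableEq ι]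

def contractionMatrix (ρ : ℝ) (J W : Matrix ι ι ℝ) : Matrix ι ι ℝ :=
  (-ρ) • 1 - J * W - Wᵀ * J

variable {ρ κl κu : ℝ} {J W : Matrix ι ι ℝ}

theorem contractionMatrix_apply_of_isDiag (hJ : J.IsDiag) (k j : ι) :
    contractionMatrix ρ J W k j =
      (if k = j then -ρ else 0) - (J k k * W k j + W j k * J j j) := by
  conv_lhs => rw [contractionMatrix, ← hJ.diagonal_diag]
  simp only [Matrix.sub_apply, Matrix.smul_apply, one_apply, diagonal_mul, mul_diagonal,
    transpose_apply, diag_apply, smul_eq_mul]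
  split_ifs <;> ring

theorem sum_norm_contractionMatrix_offDiag_le (hJ : J.IsDiag) (hJκ : ∀ k, |J k k| ≤ κu) (k : ι) :
    ∑ j ∈ univ.erase k, ‖contractionMatrix ρ J W k j‖ ≤
      κu * ∑ j ∈ univ.erase k, (|W k j| + |W j k|) := by
  rw [mul_sum]
  refine sum_le_sum fun j hj => ?_
  rw [contractionMatrix_apply_of_isDiag hJ, if_neg (ne_comm.mp (ne_of_mem_erase hj)), zero_sub,
    norm_neg, Real.norm_eq_abs]
  calc |J k k * W k j + W j k * J j j| ≤ |J k k| * |W k j| + |W j k| * |J j j| := by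
        simpa only [abs_mul] using abs_add_le (J k k * W k j) (W j k * J j j)
    _ ≤ κu * |W k j| + |W j k| * κu := by gcongr <;> exact hJκ _
    _ = κu * (|W k j| + |W j k|) := by ring

theorem sum_norm_contractionMatrix_offDiag_lt_diag (hκl : 0 ≤ κl)
    (hW : ∀ k, ρ + 2 * (κl + κu) * W k k + κu * ∑ j, (|W k j| + |W j k|) < 0)
    (hJ : J.IsDiag) (hJκ : ∀ k, J k k ∈ Set.Icc κl κu) (k : ι) :
    ∑ j ∈ univ.erase k, ‖contractionMatrix ρ J W k j‖ < contractionMatrix ρ J W k k := by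
  have hJabs : ∀ k, |J k k| ≤ κu := fun k =>
    abs_le.mpr ⟨by linarith [(hJκ k).1, (hJκ k).2], (hJκ k).2⟩
  have hoff := sum_norm_contractionMatrix_offDiag_le (ρ := ρ) (W := W) hJ hJabs k
  have hdiag : contractionMatrix ρ J W k k = -ρ - 2 * J k k * W k k := by
    rw [contractionMatrix_apply_of_isDiag hJ, if_pos rfl]; ring
  have hsplit := add_sum_erase univ (fun j => |W k j| + |W j k|) (mem_univ k)
  obtain ⟨hκlJ, hJκu⟩ := hJκ k
  have hgap : 0 ≤ 2 * (κl + κu) * W k k - 2 * J k k * W k k + κu * (|W k k| + |W k k|) := by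
    rcases le_or_gt 0 (W k k) with hw | hw
    · rw [abs_of_nonneg hw]; nlinarith
    · rw [abs_of_neg hw]; nlinarith
  rw [hdiag]
  nlinarith [hW k]

end Contraction

theorem stmt_10_general {n : ℕ} (W : Matrix (Fin n) (Fin n) ℝ) (ρ κl κu : ℝ)
    (hκl : 0 < κl)
    (hW : ∀ i, ρ + 2 * (κl + κu) * W i i + κu * ∑ j, (|W i j| + |W j i|) < 0) :
    ∀ J : Matrix (Fin n) (Fin n) ℝ, (∀ i j, i ≠ j → J i j = 0) →
      (∀ i, J i i ∈ Set.Icc κl κu) →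
      ∀ (hM : ((-ρ) • (1 : Matrix (Fin n) (Fin n) ℝ) - J * W - Wᵀ * J).IsHermitian)
        (i : Fin n), 0 < hM.eigenvalues i := by
  intro J hJ hJκ hM
  exact hM.eigenvalues_pos_of_sum_norm_lt_re_diag fun k =>
    sum_norm_contractionMatrix_offDiag_lt_diag hκl.le hW hJ hJκ k

theorem stmt_10 {n : ℕ} (W : Matrix (Fin n) (Fin n) ℝ) (ρ κl κu : ℝ)
    (hρ : 0 < ρ) (hκl : 0 < κl) (hκ : κl ≤ κu)
    (hW : ∀ i, ρ + 2 * (κl + κu) * W i i + κu * ∑ j, (|W i j| + |W j i|) < 0) :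
    ∀ J : Matrix (Fin n) (Fin n) ℝ, (∀ i j, i ≠ j → J i j = 0) →
      (∀ i, J i i ∈ Set.Icc κl κu) →
      ∀ (hM : ((-ρ) • (1 : Matrix (Fin n) (Fin n) ℝ) - J * W - Wᵀ * J).IsHermitian)
        (i : Fin n), 0 < hM.eigenvalues i :=
  stmt_10_general W ρ κl κu hκl hW
end
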